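/- arXiv:2202.12741 — 3 statements merged into one kernel-verified Lean document; each statement's English description precedes it below -/
import Mathlib

section
/- Let h ∈ {1,…,Q} and let φ be a 𝒫*_h-rectifiable Radon measure on G. Then for φ-almost every x ∈ G the set Tan_h(φ,x) is weak-* compact: every sequence of elements of Tan_h(φ,x) admits a subsequence converging, in duality with compactly supported continuous functions, to an element of Tan_h(φ,x). -/
open MeasureTheory Metric Filter Topology Set
open scoped ENNReal NNReal

/-- A Carnot group, axiomatized: a group which, in exponential coordinates (where `exp = id`,
so that the group identity is the origin), is a finite-dimensional real Lie algebra admitting a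
stratification `V₁ ⊕ ⋯ ⊕ V_κ` with `[V₁, Vᵢ] = V_{i+1}`, `[V₁, V_κ] = 0`, `V_κ ≠ 0`,
equipped with the associated dilations and with a left-invariant homogeneous distance. -/
class CarnotGroup (G : Type*) extends Group G, LieRing G, LieAlgebra ℝ G, MetricSpace G where
  fd : FiniteDimensional ℝ G
  one_eq_zero : (1 : G) = 0
  κ : ℕ
  κ_pos : 0 < κ
  layer : Fin κ → Submodule ℝ G
  layer_iSup : ⨆ i, layer i = ⊤
  layer_indep : iSupIndep layer
  layer_bracket : ∀ i : Fin κ, ∀ hi : (i : ℕ) + 1 < κ,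
    Submodule.span ℝ {z : G | ∃ x ∈ layer ⟨0, κ_pos⟩, ∃ y ∈ layer i, z = ⁅x, y⁆}
      = layer ⟨(i : ℕ) + 1, hi⟩
  layer_last_bracket : ∀ x ∈ layer ⟨0, κ_pos⟩,
    ∀ y ∈ layer ⟨κ - 1, Nat.sub_lt κ_pos one_pos⟩, ⁅x, y⁆ = 0
  layer_last_ne_bot : layer ⟨κ - 1, Nat.sub_lt κ_pos one_pos⟩ ≠ ⊥
  dil : ℝ → G → G
  dil_layer : ∀ (a : ℝ) (i : Fin κ), ∀ x ∈ layer i, dil a x = a ^ ((i : ℕ) + 1) • x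
  dil_linear : ∀ a : ℝ, IsLinearMap ℝ (dil a)
  dil_mul : ∀ a : ℝ, 0 < a → ∀ x y : G, dil a (x * y) = dil a x * dil a y
  dist_leftInvariant : ∀ z x y : G, dist (z * x) (z * y) = dist x y
  dist_dil : ∀ a : ℝ, 0 < a → ∀ x y : G, dist (dil a x) (dil a y) = a * dist x y

namespace Carnot

variable {G : Type*} [CarnotGroup G]

/-- The number of layers of the stratification. -/
noncomputable def kap (G : Type*) [CarnotGroup G] : ℕ := CarnotGroup.κ (G := G)

/-- The homogeneous dimension `Q` of a Carnot group. -/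
noncomputable def Qdim (G : Type*) [CarnotGroup G] : ℕ :=
  ∑ i : Fin (kap G), ((i : ℕ) + 1) * Module.finrank ℝ (CarnotGroup.layer (G := G) i)

/-- The homogeneous norm induced by the distance: `‖x‖ = d(x, e)`. -/
noncomputable def gnorm (x : G) : ℝ := dist x 1

/-- A homogeneous subgroup: a closed subgroup invariant under all dilations. -/
def IsHomogeneous (V : Subgroup G) : Prop :=
  IsClosed (V : Set G) ∧ ∀ a : ℝ, 0 < a → CarnotGroup.dil a '' (V : Set G) = (V : Set G)

/-- `Gr G h`: the homogeneous subgroups of Hausdorff dimension `h`. -/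
def Gr (G : Type*) [CarnotGroup G] (h : ℕ) : Set (Subgroup G) :=
  {V | IsHomogeneous V ∧ dimH (V : Set G) = (h : ℝ≥0∞)}

/-- `V` and `L` are complementary subgroups: `G = V · L` and `V ∩ L = {e}`. -/
def AreComplementary (V L : Subgroup G) : Prop :=
  (∀ g : G, ∃ v ∈ V, ∃ l ∈ L, g = v * l) ∧ (V : Set G) ∩ (L : Set G) = {1}

/-- The complemented Grassmannian `Gr_c(h)`. -/
def GrC (G : Type*) [CarnotGroup G] (h : ℕ) : Set (Subgroup G) :=
  {V | V ∈ Gr G h ∧ ∃ L : Subgroup G, IsHomogeneous L ∧ AreComplementary V L}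

/-- The co-normal Grassmannian `Gr_⊴(h)`: homogeneous subgroups admitting a `normal`
complementary subgroup. -/
def GrN (G : Type*) [CarnotGroup G] (h : ℕ) : Set (Subgroup G) :=
  {V | V ∈ Gr G h ∧ ∃ L : Subgroup G, IsHomogeneous L ∧ L.Normal ∧ AreComplementary V L}

/-- Stratification vector `𝔰(V) = (dim(V₁ ∩ V), …, dim(V_κ ∩ V))`. -/
noncomputable def stratVec (V : Subgroup G) : Fin (kap G) → ℕ :=
  fun i => Module.finrank ℝ
    (Submodule.span ℝ ((V : Set G) ∩ (CarnotGroup.layer (G := G) i : Set G)))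

/-- `𝔖(h)`: the set of stratification vectors of elements of `Gr(h)`. -/
def stratSet (G : Type*) [CarnotGroup G] (h : ℕ) : Set (Fin (kap G) → ℕ) :=
  stratVec '' Gr G h

/-- `Gr_⊴^𝔰(h)`: the co-normal Grassmannian with prescribed stratification vector. -/
def GrNs (G : Type*) [CarnotGroup G] (h : ℕ) (s : Fin (kap G) → ℕ) : Set (Subgroup G) :=
  {V | V ∈ GrN G h ∧ stratVec V = s}

/-- The metric `d_G` on the Grassmannian: Hausdorff distance of the intersections with
the closed unit ball centered at the identity. -/
noncomputable def grDist (V W : Subgroup G) : ℝ :=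
  hausdorffDist ((V : Set G) ∩ closedBall (1 : G) 1) ((W : Set G) ∩ closedBall (1 : G) 1)

/-- The `h`-dimensional spherical Hausdorff measure `S^h`, built from the metric
(Carathéodory) construction with coverings by closed balls, the gauge of a set being
the infimum of `r^h` over closed balls of radius `r` containing it. -/
noncomputable def sphH (G : Type*) [CarnotGroup G] [MeasurableSpace G] [BorelSpace G]
    (h : ℕ) : Measure G :=
  Measure.mkMetric' fun s =>
    ⨅ (x : G) (r : ℝ) (_ : 0 ≤ r) (_ : s ⊆ closedBall x r), (ENNReal.ofReal r) ^ h

/-- The centered Hausdorff pre-measure `C₀^h`. -/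
noncomputable def centeredPre (h : ℕ) (E : Set G) : ℝ≥0∞ :=
  ⨆ (δ : ℝ) (_ : 0 < δ), ⨅ (c : ℕ → G × ℝ) (_ : E ⊆ ⋃ j, closedBall (c j).1 (c j).2)
    (_ : ∀ j, (c j).1 ∈ E) (_ : ∀ j, (c j).2 ≤ δ),
    ∑' j, ENNReal.ofReal ((c j).2) ^ h

/-- The `h`-dimensional centered Hausdorff measure `C^h`, as a set function. -/
noncomputable def centH (h : ℕ) (A : Set G) : ℝ≥0∞ :=
  ⨆ (E : Set G) (_ : E ⊆ A), centeredPre h E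

/-- `μ` is (a measure representing) the restriction `C^h ⌞ V`. -/
def IsCHRestrict [MeasurableSpace G] (h : ℕ) (V : Set G) (μ : Measure G) : Prop :=
  ∀ s : Set G, MeasurableSet s → μ s = centH h (s ∩ V)

/-- The blow-up `r^{-h} T_{x,r} φ`, where `T_{x,r}φ(E) = φ(x · δ_r(E))`. -/
noncomputable def blow [MeasurableSpace G] (φ : Measure G) (x : G) (r : ℝ) (h : ℕ) :
    Measure G :=
  (ENNReal.ofReal r ^ h)⁻¹ • Measure.map (fun p => CarnotGroup.dil r⁻¹ (x⁻¹ * p)) φ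

/-- Weak-* convergence of measures, in duality with continuous compactly supported functions. -/
def WeakStar [MeasurableSpace G] (μ : ℕ → Measure G) (ν : Measure G) : Prop :=
  ∀ f : G → ℝ, Continuous f → HasCompactSupport f →
    Tendsto (fun i => ∫ p, f p ∂(μ i)) atTop (𝓝 (∫ p, f p ∂ν))

/-- The set `Tan_h(φ, x)` of `h`-tangent measures of `φ` at `x`. -/
def Tan [MeasurableSpace G] (h : ℕ) (φ : Measure G) (x : G) : Set (Measure G) :=
  {ν | ∃ r : ℕ → ℝ, (∀ i, 0 < r i) ∧ Tendsto r atTop (𝓝 0) ∧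
    WeakStar (fun i => blow φ x (r i) h) ν}

/-- Lower `h`-density `Θ^h_*(φ, x)`. -/
noncomputable def lowDen [MeasurableSpace G] (h : ℕ) (φ : Measure G) (x : G) : ℝ≥0∞ :=
  liminf (fun r : ℝ => φ (closedBall x r) / ENNReal.ofReal r ^ h) (𝓝[>] (0 : ℝ))

/-- Upper `h`-density `Θ^{h,*}(φ, x)`. -/
noncomputable def upDen [MeasurableSpace G] (h : ℕ) (φ : Measure G) (x : G) : ℝ≥0∞ :=
  limsup (fun r : ℝ => φ (closedBall x r) / ENNReal.ofReal r ^ h) (𝓝[>] (0 : ℝ))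

/-- `0 < Θ^h_*(φ,x) ≤ Θ^{h,*}(φ,x) < ∞`. -/
def GoodDensities [MeasurableSpace G] (h : ℕ) (φ : Measure G) (x : G) : Prop :=
  0 < lowDen h φ x ∧ lowDen h φ x ≤ upDen h φ x ∧ upDen h φ x < ⊤

/-- The flat measures `λ · S^h ⌞ V` with `λ > 0` and `V ∈ 𝒢`. -/
def flatOn (G : Type*) [CarnotGroup G] [MeasurableSpace G] [BorelSpace G]
    (h : ℕ) (𝒢 : Set (Subgroup G)) : Set (Measure G) :=
  {ν | ∃ lam : ℝ, 0 < lam ∧ ∃ V ∈ 𝒢,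
    ν = ENNReal.ofReal lam • (sphH G h).restrict (V : Set G)}

/-- `φ` is a `𝒫*_h`-rectifiable measure. -/
def PStarRect (G : Type*) [CarnotGroup G] [MeasurableSpace G] [BorelSpace G]
    (h : ℕ) (φ : Measure G) : Prop :=
  ∀ᵐ x ∂φ, GoodDensities h φ x ∧ Tan h φ x ⊆ flatOn G h (Gr G h)

/-- The constant `C(V, L)`: the largest constant `c` such that
`c · ‖P_L(g)‖ ≤ dist(g, V)` for every `g`. -/
noncomputable def splitConst (V L : Subgroup G) : ℝ :=
  sSup {c : ℝ | ∀ g v l : G, v ∈ V → l ∈ L → g = v * l →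
    c * gnorm l ≤ infDist g (V : Set G)}

/-- `𝔢(V) = sup { C(V, L)/2 : L a normal complementary subgroup of V }`. -/
noncomputable def eConst (V : Subgroup G) : ℝ :=
  sSup {e : ℝ | ∃ L : Subgroup G, IsHomogeneous L ∧ L.Normal ∧ AreComplementary V L ∧
    e = splitConst V L / 2}

/-- `PV`, `PL` are the splitting projections of the decomposition `G = V · L`. -/
def IsSplitting (V L : Subgroup G) (PV PL : G → G) : Prop :=
  ∀ g : G, PV g ∈ V ∧ PL g ∈ L ∧ g = PV g * PL g

/-- The intrinsic cone `C_W(α) = {w : dist(w, W) ≤ α ‖w‖}`. -/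
def cone (W : Subgroup G) (α : ℝ) : Set G :=
  {w : G | infDist w (W : Set G) ≤ α * gnorm w}

/-- Left translation of a set. -/
def lTrans (x : G) (S : Set G) : Set G := (fun p => x * p) '' S

/-- The set `E(θ, γ)` relative to a measure `φ` supported on the compact set `K`. -/
def EsetK [MeasurableSpace G] (φ : Measure G) (K : Set G) (h θ γ : ℕ) : Set G :=
  {x | x ∈ K ∧ ∀ r : ℝ, 0 < r → r < 1 / γ →
    (θ : ℝ≥0∞)⁻¹ * ENNReal.ofReal r ^ h ≤ φ (closedBall x r) ∧
      φ (closedBall x r) ≤ (θ : ℝ≥0∞) * ENNReal.ofReal r ^ h}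

/-- `F_K(φ, ψ)`: sup of `|∫ f dφ − ∫ f dψ|` over nonnegative `1`-Lipschitz functions
supported in `K`. -/
noncomputable def FK [MeasurableSpace G] (K : Set G) (φ ψ : Measure G) : ℝ :=
  sSup {v : ℝ | ∃ f : G → ℝ, LipschitzWith 1 f ∧ (∀ x, 0 ≤ f x) ∧ tsupport f ⊆ K ∧
    v = |∫ x, f x ∂φ - ∫ x, f x ∂ψ|}

/-- `d_{x,r}(φ, 𝔐(h, 𝒢))`. -/
noncomputable def dxr (G : Type*) [CarnotGroup G] [MeasurableSpace G] [BorelSpace G]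
    (h : ℕ) (φ : Measure G) (x : G) (r : ℝ) (𝒢 : Set (Subgroup G)) : ℝ :=
  sInf {v : ℝ | ∃ Θ : ℝ, 0 < Θ ∧ ∃ V ∈ 𝒢,
    v = FK (closedBall x r) φ
      (ENNReal.ofReal Θ • (sphH G h).restrict (lTrans x (V : Set G))) / r ^ (h + 1)}

end Carnot

open Carnot MeasureTheory Metric Filter Topology Set
open scoped ENNReal NNReal

/-!
At a point `x` where the upper density is finite, `φ (B(x, s)) ≤ c sʰ` for small `s`, so the
blow-ups `r⁻ʰ T_{x,r} φ` have uniformly bounded mass on every bounded set as `r → 0`, and so have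
their vague limits, the tangent measures. Each tangent measure is matched, on finitely many members
of a countable dense family of test functions, by a single blow-up of small radius. Choosing these
radii diagonally, Helly selection and the Riesz–Markov–Kakutani theorem give a subsequence of
blow-ups converging vaguely to a measure `ν'`, which is therefore tangent; the uniform mass bounds
let the convergence on the dense family pass to all test functions, for the blow-ups and for the
given tangent measures alike.
-/

open scoped CompactlySupported

lemma cauchySeq_of_forall_eventually_dist_le {α : Type*} [PseudoMetricSpace α] {u : ℕ → α}
    (h : ∀ ε > 0, ∃ v : ℕ → α, CauchySeq v ∧ ∀ᶠ i in atTop, dist (u i) (v i) ≤ ε) :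
    CauchySeq u := by
  refine Metric.cauchySeq_iff'.2 fun ε hε => ?_
  obtain ⟨v, hv, huv⟩ := h (ε / 4) (by positivity)
  obtain ⟨N, hN⟩ := Metric.cauchySeq_iff'.1 hv (ε / 4) (by positivity)
  obtain ⟨M, hM⟩ := eventually_atTop.1 huv
  refine ⟨max N M, fun n hn => ?_⟩
  have h₁ := hN n (le_of_max_le_left hn)
  have h₂ := hN (max N M) (le_max_left _ _)
  have h₃ := hM n (le_of_max_le_right hn)
  have h₄ := hM (max N M) (le_max_right _ _)
  calc dist (u n) (u (max N M))
      ≤ dist (u n) (v n) + (dist (v n) (v N) + dist (v (max N M)) (v N))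
        + dist (u (max N M)) (v (max N M)) := by
        linarith [dist_triangle4 (u n) (v n) (v (max N M)) (u (max N M)),
          dist_triangle_right (v n) (v (max N M)) (v N), dist_comm (v (max N M)) (u (max N M))]
    _ < ε := by linarith

lemma tendsto_of_forall_eventually_dist_le {α : Type*} [PseudoMetricSpace α] {u : ℕ → α} {a : α}
    (h : ∀ ε > 0, ∃ v : ℕ → α, ∃ b, Tendsto v atTop (𝓝 b) ∧
      (∀ᶠ i in atTop, dist (u i) (v i) ≤ ε) ∧ dist a b ≤ ε) :
    Tendsto u atTop (𝓝 a) := by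
  refine Metric.tendsto_atTop.2 fun ε hε => ?_
  obtain ⟨v, b, hv, huv, hab⟩ := h (ε / 4) (by positivity)
  obtain ⟨N, hN⟩ := Metric.tendsto_atTop.1 hv (ε / 4) (by positivity)
  obtain ⟨M, hM⟩ := eventually_atTop.1 huv
  refine ⟨max N M, fun n hn => ?_⟩
  have h₁ := hN n (le_of_max_le_left hn)
  have h₂ := hM n (le_of_max_le_right hn)
  calc dist (u n) a ≤ dist (u n) (v n) + dist (v n) b + dist a b := by
        linarith [dist_triangle4 (u n) (v n) b a, dist_comm a b]
    _ < ε := by linarith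

lemma exists_strictMono_forall_tendsto {a : ℕ → ℕ → ℝ}
    (ha : ∀ j, ∃ B, ∀ᶠ i in atTop, |a i j| ≤ B) :
    ∃ σ : ℕ → ℕ, StrictMono σ ∧ ∀ j, ∃ ℓ, Tendsto (fun i => a (σ i) j) atTop (𝓝 ℓ) := by
  have hbdd : ∀ j, BddAbove (range fun i => |a i j|) := fun j =>
    let ⟨_, hB⟩ := ha j
    (isBoundedUnder_of_eventually_le hB).bddAbove_range
  choose B hB using hbdd
  have hmem : ∀ i, (fun j => a i j) ∈ univ.pi fun j => Icc (-B j) (B j) := fun i =>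
    mem_univ_pi.2 fun j => abs_le.1 (hB j ⟨i, rfl⟩)
  obtain ⟨ℓ, -, σ, hσ, hℓ⟩ := (isCompact_univ_pi fun j => isCompact_Icc).tendsto_subseq hmem
  exact ⟨σ, hσ, fun j => ⟨ℓ j, tendsto_pi_nhds.1 hℓ j⟩⟩

lemma abs_sub_mul_le_of_eq_one_on_tsupport {X : Type*} [TopologicalSpace X] {f g χ : X → ℝ}
    {δ : ℝ} (hδ : 0 ≤ δ) (hχ : ∀ p, χ p ∈ Icc (0 : ℝ) 1) (hfχ : ∀ p ∈ tsupport f, χ p = 1)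
    (hfg : ∀ p ∈ tsupport χ, |f p - g p| ≤ δ) (p : X) : |f p - χ p * g p| ≤ δ := by
  by_cases hpf : p ∈ tsupport f
  · have hχp := hfχ p hpf
    rw [hχp, one_mul]
    exact hfg p (subset_tsupport _ (by simp [hχp]))
  rw [image_eq_zero_of_notMem_tsupport hpf, zero_sub, abs_neg]
  by_cases hpχ : p ∈ tsupport χ
  · have := hfg p hpχ
    rw [image_eq_zero_of_notMem_tsupport hpf, zero_sub, abs_neg] at this
    rw [abs_mul, abs_of_nonneg (hχ p).1]
    nlinarith [(hχ p).2, abs_nonneg (g p)]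
  · simpa [image_eq_zero_of_notMem_tsupport hpχ] using hδ

namespace CompactlySupportedContinuousMap

variable {X : Type*} [TopologicalSpace X] [T2Space X] [LocallyCompactSpace X]
  [SecondCountableTopology X]

/-- Truncate a dense sequence of `C(X, ℝ)` by cutoffs along a compact exhaustion. -/
theorem exists_seq_approx :
    ∃ D : ℕ → C_c(X, ℝ), ∀ f : C_c(X, ℝ), ∃ K, IsCompact K ∧ tsupport f ⊆ K ∧
      ∀ δ > 0, ∃ j, tsupport (D j) ⊆ K ∧ ∀ p, dist (f p) (D j p) ≤ δ := by
  let E := CompactExhaustion.choice X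
  choose χ hχ1 _ hχc hχ01 using fun n =>
    exists_continuous_one_zero_of_isCompact (E.isCompact n) isClosed_empty (disjoint_empty _)
  obtain ⟨u, hu⟩ := TopologicalSpace.exists_dense_seq C(X, ℝ)
  let D : ℕ → C_c(X, ℝ) := fun k =>
    ⟨χ k.unpair.1 * u k.unpair.2, (hχc k.unpair.1).mul_right⟩
  refine ⟨D, fun f => ?_⟩
  obtain ⟨n, hn⟩ := E.exists_superset_of_isCompact f.hasCompactSupport
  have hχf : ∀ p ∈ tsupport f, χ n p = 1 := fun p hp => hχ1 n (hn hp)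
  refine ⟨tsupport (χ n), hχc n, fun p hp => subset_tsupport _ (by simp [hχf p hp]),
    fun δ hδ => ?_⟩
  have := isCompact_iff_compactSpace.1 (hχc n)
  obtain ⟨l, hl⟩ := hu.exists_mem_open
    (isOpen_ball.preimage (ContinuousMap.continuous_restrict (tsupport (χ n))))
    ⟨(f : C(X, ℝ)), mem_preimage.2 (mem_ball_self hδ)⟩
  refine ⟨Nat.pair n l, ?_, fun p => ?_⟩
  · simp only [D, Nat.unpair_pair]
    exact tsupport_mul_subset_left
  · have := abs_sub_mul_le_of_eq_one_on_tsupport hδ.le (hχ01 n) hχf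
      (fun q hq => (ContinuousMap.dist_apply_le_dist (f := (f : C(X, ℝ)).restrict _)
        (g := (u l).restrict _) ⟨q, hq⟩).trans (mem_ball'.1 hl).le) p
    simpa [D, Real.dist_eq] using this

end CompactlySupportedContinuousMap

namespace MeasureTheory

variable {X : Type*} [TopologicalSpace X] [MeasurableSpace X]

def TendstoVaguely (μ : ℕ → Measure X) (ν : Measure X) : Prop :=
  ∀ f : C_c(X, ℝ), Tendsto (fun i => ∫ p, f p ∂μ i) atTop (𝓝 (∫ p, f p ∂ν))

def vagueLimitsAtZero (m : ℝ → Measure X) : Set (Measure X) :=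
  {ν | ∃ r : ℕ → ℝ, (∀ i, 0 < r i) ∧ Tendsto r atTop (𝓝 0) ∧
    TendstoVaguely (fun i => m (r i)) ν}

lemma exists_dist_integral_lt_of_mem_vagueLimitsAtZero {m : ℝ → Measure X} {ν : Measure X}
    (hν : ν ∈ vagueLimitsAtZero m) (D : ℕ → C_c(X, ℝ)) (n : ℕ) {ε : ℝ} (hε : 0 < ε) :
    ∃ ρ, 0 < ρ ∧ ρ < ε ∧ ∀ j ≤ n, dist (∫ p, D j p ∂m ρ) (∫ p, D j p ∂ν) < ε := by
  obtain ⟨r, hr, hr0, hrν⟩ := hν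
  have hclose : ∀ᶠ k in atTop, ∀ j ∈ Iic n, dist (∫ p, D j p ∂m (r k)) (∫ p, D j p ∂ν) < ε :=
    (eventually_all_finite (finite_Iic n)).2 fun j _ => (hrν (D j)).eventually (ball_mem_nhds _ hε)
  obtain ⟨k, hk, hkν⟩ := ((hr0.eventually_lt_const hε).and hclose).exists
  exact ⟨r k, hr k, hk, hkν⟩

section OpensMeasurable

variable [OpensMeasurableSpace X]

lemma dist_integral_le_of_measure_le {μ : Measure X} [IsFiniteMeasureOnCompacts μ] {K : Set X}
    (hK : IsCompact K) {C : ℝ≥0} (hμK : μ K ≤ C) {f g : C_c(X, ℝ)} (hf : tsupport f ⊆ K)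
    (hg : tsupport g ⊆ K) {δ : ℝ} (hδ : 0 ≤ δ) (hfg : ∀ p, dist (f p) (g p) ≤ δ) :
    dist (∫ p, f p ∂μ) (∫ p, g p ∂μ) ≤ C * δ := by
  have hvanish : ∀ p ∉ K, f p - g p = 0 := fun p hp => by
    rw [image_eq_zero_of_notMem_tsupport (fun h => hp (hf h)),
      image_eq_zero_of_notMem_tsupport (fun h => hp (hg h)), sub_zero]
  rw [dist_eq_norm, ← integral_sub f.integrable g.integrable,
    ← setIntegral_eq_integral_of_forall_compl_eq_zero hvanish]
  calc ‖∫ p in K, f p - g p ∂μ‖ ≤ δ * μ.real K :=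
        norm_setIntegral_le_of_norm_le_const hK.measure_lt_top fun p _ =>
          dist_eq_norm (f p) (g p) ▸ hfg p
    _ ≤ C * δ := by
        rw [mul_comm]
        exact mul_le_mul_of_nonneg_right (ENNReal.toReal_le_coe_of_le_coe hμK) hδ

lemma TendstoVaguely.dist_integral_le {μ : ℕ → Measure X}
    [∀ i, IsFiniteMeasureOnCompacts (μ i)] {ν : Measure X} (hμν : TendstoVaguely μ ν) {K : Set X} (hK : IsCompact K) {C : ℝ≥0}
    (hμK : ∀ᶠ i in atTop, μ i K ≤ C) {f g : C_c(X, ℝ)} (hf : tsupport f ⊆ K)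
    (hg : tsupport g ⊆ K) {δ : ℝ} (hδ : 0 ≤ δ) (hfg : ∀ p, dist (f p) (g p) ≤ δ) :
    dist (∫ p, f p ∂ν) (∫ p, g p ∂ν) ≤ C * δ :=
  le_of_tendsto ((hμν f).dist (hμν g))
    (hμK.mono fun _ hi => dist_integral_le_of_measure_le hK hi hf hg hδ hfg)

lemma dist_integral_le_of_mem_vagueLimitsAtZero {m : ℝ → Measure X}
    (hm : ∀ r, 0 < r → IsFiniteMeasureOnCompacts (m r)) {ν : Measure X}
    (hν : ν ∈ vagueLimitsAtZero m) {K : Set X} (hK : IsCompact K) {C : ℝ≥0}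
    (hmK : ∀ᶠ r in 𝓝[>] 0, m r K ≤ C) {f g : C_c(X, ℝ)} (hf : tsupport f ⊆ K)
    (hg : tsupport g ⊆ K) {δ : ℝ} (hδ : 0 ≤ δ) (hfg : ∀ p, dist (f p) (g p) ≤ δ) :
    dist (∫ p, f p ∂ν) (∫ p, g p ∂ν) ≤ C * δ := by
  obtain ⟨r, hr, hr0, hrν⟩ := hν
  have := fun i => hm (r i) (hr i)
  exact hrν.dist_integral_le hK
    ((tendsto_nhdsWithin_iff.2 ⟨hr0, .of_forall hr⟩).eventually hmK) hf hg hδ hfg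

end OpensMeasurable

variable [T2Space X] [LocallyCompactSpace X] [SecondCountableTopology X]

/-- The limits along the dense sequence of `exists_seq_approx` extend to a positive linear
functional on `C_c(X, ℝ)`, represented by a measure via the Riesz–Markov–Kakutani theorem. -/
theorem exists_strictMono_tendstoVaguely [BorelSpace X] {μ : ℕ → Measure X}
    [∀ i, IsFiniteMeasureOnCompacts (μ i)]
    (hμ : ∀ K, IsCompact K → ∃ C : ℝ≥0, ∀ᶠ i in atTop, μ i K ≤ C) :
    ∃ σ : ℕ → ℕ, StrictMono σ ∧ ∃ ν : Measure X, TendstoVaguely (fun i => μ (σ i)) ν := by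
  obtain ⟨D, hD⟩ := CompactlySupportedContinuousMap.exists_seq_approx (X := X)
  have hbdd : ∀ j, ∃ B, ∀ᶠ i in atTop, |∫ p, D j p ∂μ i| ≤ B := fun j => by
    obtain ⟨M, hM⟩ := (D j).hasCompactSupport.exists_bound_of_continuous (D j).continuous
    obtain ⟨C, hC⟩ := hμ _ (D j).hasCompactSupport
    have hM' : ∀ p, dist (D j p) ((0 : C_c(X, ℝ)) p) ≤ |M| := fun p => by
      simpa using (hM p).trans (le_abs_self M)
    refine ⟨C * |M|, hC.mono fun i hi => ?_⟩
    simpa [Real.dist_eq] using dist_integral_le_of_measure_le (D j).hasCompactSupport hi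
      subset_rfl (by simp) (abs_nonneg M) hM'
  obtain ⟨σ, hσ, hlim⟩ := exists_strictMono_forall_tendsto hbdd
  have hcauchy : ∀ f : C_c(X, ℝ), CauchySeq fun i => ∫ p, f p ∂μ (σ i) := fun f => by
    obtain ⟨K, hK, hfK, happrox⟩ := hD f
    obtain ⟨C, hC⟩ := hμ K hK
    refine cauchySeq_of_forall_eventually_dist_le fun ε hε => ?_
    obtain ⟨δ, hδ, hδC⟩ := exists_pos_mul_lt hε C
    obtain ⟨j, hjK, hj⟩ := happrox δ hδ
    obtain ⟨ℓ, hℓ⟩ := hlim j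
    exact ⟨_, hℓ.cauchySeq, (hσ.tendsto_atTop.eventually hC).mono fun i hi =>
      (dist_integral_le_of_measure_le hK hi hfK hjK hδ.le hj).trans hδC.le⟩
  choose Λ hΛ using fun f => cauchySeq_tendsto_of_complete (hcauchy f)
  let L : C_c(X, ℝ) →ₗ[ℝ] ℝ := linearMapOfTendsto Λ
    (fun i => (CompactlySupportedContinuousMap.integralPositiveLinearMap (μ (σ i))).toLinearMap)
    (tendsto_pi_nhds.2 hΛ)
  let Λpos : C_c(X, ℝ) →ₚ[ℝ] ℝ := PositiveLinearMap.mk₀ L fun f hf =>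
    ge_of_tendsto' (hΛ f) fun _ => integral_nonneg hf
  refine ⟨σ, hσ, RealRMK.rieszMeasure Λpos, fun f => ?_⟩
  rw [RealRMK.integral_rieszMeasure]
  exact hΛ f

/-- The radii approximating each `ν i` are merged diagonally into one sequence `ρ`; a vague
limit of a subsequence of `m ∘ ρ` is then also the limit of the corresponding `ν (σ i)`. -/
theorem exists_strictMono_tendstoVaguely_mem_vagueLimitsAtZero [BorelSpace X]
    {m : ℝ → Measure X} (hm_fin : ∀ r, 0 < r → IsFiniteMeasureOnCompacts (m r))
    (hm : ∀ K, IsCompact K → ∃ C : ℝ≥0, ∀ᶠ r in 𝓝[>] 0, m r K ≤ C) {ν : ℕ → Measure X}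
    (hν : ∀ i, ν i ∈ vagueLimitsAtZero m) :
    ∃ σ : ℕ → ℕ, StrictMono σ ∧ ∃ ν' ∈ vagueLimitsAtZero m,
      TendstoVaguely (fun i => ν (σ i)) ν' := by
  obtain ⟨D, hD⟩ := CompactlySupportedContinuousMap.exists_seq_approx (X := X)
  have hρ : ∀ i : ℕ, ∃ ρ : ℝ, 0 < ρ ∧ ρ < 1 / ((i : ℝ) + 1) ∧
      ∀ j ≤ i, dist (∫ p, D j p ∂m ρ) (∫ p, D j p ∂ν i) < 1 / ((i : ℝ) + 1) := fun i =>
    exists_dist_integral_lt_of_mem_vagueLimitsAtZero (hν i) D i (by positivity)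
  choose ρ hρpos hρlt hρν using hρ
  have hρ0 : Tendsto ρ atTop (𝓝 0) := squeeze_zero (fun i => (hρpos i).le)
    (fun i => (hρlt i).le) tendsto_one_div_add_atTop_nhds_zero_nat
  have := fun i => hm_fin (ρ i) (hρpos i)
  obtain ⟨σ, hσ, ν', hν'⟩ := exists_strictMono_tendstoVaguely (μ := fun i => m (ρ i))
    fun K hK => (hm K hK).imp fun _ hC =>
      (tendsto_nhdsWithin_iff.2 ⟨hρ0, .of_forall hρpos⟩).eventually hC
  have hν'mem : ν' ∈ vagueLimitsAtZero m :=
    ⟨fun i => ρ (σ i), fun i => hρpos _, hρ0.comp hσ.tendsto_atTop, hν'⟩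
  refine ⟨σ, hσ, ν', hν'mem, fun f => ?_⟩
  obtain ⟨K, hK, hfK, happrox⟩ := hD f
  obtain ⟨C, hC⟩ := hm K hK
  refine tendsto_of_forall_eventually_dist_le fun ε hε => ?_
  obtain ⟨δ, hδ, hδC⟩ := exists_pos_mul_lt hε C
  obtain ⟨j, hjK, hj⟩ := happrox δ hδ
  refine ⟨fun i => ∫ p, D j p ∂ν (σ i), ∫ p, D j p ∂ν', ?_, .of_forall fun i => ?_, ?_⟩
  · refine (hν' (D j)).congr_dist (squeeze_zero' (.of_forall fun _ => dist_nonneg) ?_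
      (tendsto_one_div_add_atTop_nhds_zero_nat.comp hσ.tendsto_atTop))
    filter_upwards [eventually_ge_atTop j] with i hi
    exact (hρν (σ i) j (hi.trans hσ.le_apply)).le
  · exact (dist_integral_le_of_mem_vagueLimitsAtZero hm_fin (hν _) hK hC hfK hjK hδ.le hj).trans
      hδC.le
  · exact (dist_integral_le_of_mem_vagueLimitsAtZero hm_fin hν'mem hK hC hfK hjK hδ.le hj).trans
      hδC.le

end MeasureTheory

namespace CarnotGroup

variable {G : Type*} [CarnotGroup G]

lemma dil_one (a : ℝ) : dil a (1 : G) = 1 := by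
  rw [CarnotGroup.one_eq_zero (G := G)]
  exact (dil_linear a).map_zero

lemma dil_inv_dil {a : ℝ} (ha : a ≠ 0) (x : G) : dil a⁻¹ (dil a x) = x := by
  have hx : x ∈ ⨆ i, layer (G := G) i := by rw [layer_iSup]; trivial
  refine Submodule.iSup_induction _ (motive := fun z => dil a⁻¹ (dil a z) = z) hx
    (fun i y hy => ?_) ?_ (fun y z hy hz => ?_)
  · rw [dil_layer a i y hy, (dil_linear _).map_smul, dil_layer _ i y hy, smul_smul, ← mul_pow,
      mul_inv_cancel₀ ha, one_pow, one_smul]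
  · rw [(dil_linear a).map_zero, (dil_linear _).map_zero]
  · rw [(dil_linear a).map_add, (dil_linear _).map_add, hy, hz]

lemma dil_dil_inv {a : ℝ} (ha : a ≠ 0) (x : G) : dil a (dil a⁻¹ x) = x := by
  simpa using dil_inv_dil (inv_ne_zero ha) x

lemma continuous_dil {a : ℝ} (ha : 0 < a) : Continuous (dil (G := G) a) :=
  (LipschitzWith.of_dist_le_mul (K := ⟨a, ha.le⟩) fun p q => (dist_dil a ha p q).le).continuous

lemma isometry_mul_left (x : G) : Isometry (x * ·) :=
  Isometry.of_dist_eq (dist_leftInvariant x)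

lemma dist_dil_one {a : ℝ} (ha : 0 < a) (u : G) : dist (dil a u) 1 = a * dist u 1 := by
  simpa [dil_one] using dist_dil a ha u 1

lemma dist_mul_left_self (x w : G) : dist (x * w) x = dist w 1 := by
  simpa using dist_leftInvariant x w 1

lemma properSpace_of_isCompact_closedBall {p₀ : G} {t : ℝ} (ht : 0 < t)
    (hK : IsCompact (closedBall p₀ t)) : ProperSpace G := by
  refine .of_isCompact_closedBall_of_le t fun y s hs => ?_
  have hs₀ : 0 < s := ht.trans_le hs
  have hF : Continuous fun q => y * dil (s / t) (p₀⁻¹ * q) :=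
    (isometry_mul_left y).continuous.comp <|
      (continuous_dil (div_pos hs₀ ht)).comp (isometry_mul_left p₀⁻¹).continuous
  refine (hK.image hF).of_isClosed_subset isClosed_closedBall fun q hq =>
    ⟨p₀ * dil (t / s) (y⁻¹ * q), ?_, ?_⟩
  · rw [mem_closedBall, dist_mul_left_self, dist_dil_one (div_pos ht hs₀), ← dist_mul_left_self y,
      mul_inv_cancel_left, div_mul_eq_mul_div, div_le_iff₀ hs₀]
    exact mul_le_mul_of_nonneg_left (mem_closedBall.1 hq) ht.le
  · simp only [inv_mul_cancel_left]
    rw [← inv_div, dil_inv_dil (div_pos ht hs₀).ne', mul_inv_cancel_left]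

/-- The distance of a `CarnotGroup` is not tied to its vector topology, so properness has to be
earned: dilations and translations carry a small compact ball onto any ball, hence a single nonzero
compactly supported function makes `G` proper. -/
theorem properSpace_or_forall_eq_zero :
    ProperSpace G ∨ ∀ f : G → ℝ, Continuous f → HasCompactSupport f → f = 0 := by
  refine or_iff_not_imp_right.2 fun h => ?_
  push Not at h
  obtain ⟨f, hf, hfc, hf0⟩ := h
  obtain ⟨p₀, hp₀⟩ := Function.ne_iff.1 hf0
  obtain ⟨ε, hε, hball⟩ := Metric.isOpen_iff.1 hf.isOpen_support p₀ hp₀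
  exact properSpace_of_isCompact_closedBall (half_pos hε) <|
    hfc.of_isClosed_subset isClosed_closedBall <|
      (closedBall_subset_ball (half_lt_self hε)).trans (hball.trans (subset_tsupport f))

end CarnotGroup

namespace Carnot

open CarnotGroup

variable {G : Type*} [CarnotGroup G] [MeasurableSpace G]

lemma weakStar_iff_tendstoVaguely {μ : ℕ → Measure G} {ν : Measure G} :
    WeakStar μ ν ↔ TendstoVaguely μ ν :=
  ⟨fun h f => h f f.continuous f.hasCompactSupport, fun h f hf hfs => h ⟨⟨f, hf⟩, hfs⟩⟩

lemma tan_eq_vagueLimitsAtZero (h : ℕ) (φ : Measure G) (x : G) :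
    Tan h φ x = vagueLimitsAtZero fun r => blow φ x r h := by
  simp only [Tan, vagueLimitsAtZero, weakStar_iff_tendstoVaguely]

variable [BorelSpace G]

lemma measurable_dil_inv_mul (x : G) {r : ℝ} (hr : 0 < r) :
    Measurable fun p : G => dil r⁻¹ (x⁻¹ * p) :=
  ((continuous_dil (inv_pos.2 hr)).comp (isometry_mul_left x⁻¹).continuous).measurable

lemma blow_closedBall_one (φ : Measure G) (x : G) {r : ℝ} (hr : 0 < r) (h : ℕ) (R : ℝ) :
    blow φ x r h (closedBall 1 R) = (ENNReal.ofReal r ^ h)⁻¹ * φ (closedBall x (r * R)) := by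
  rw [blow, Measure.smul_apply,
    Measure.map_apply (measurable_dil_inv_mul x hr) measurableSet_closedBall, smul_eq_mul]
  congr 2
  ext p
  rw [mem_preimage, mem_closedBall, mem_closedBall, dist_dil_one (inv_pos.2 hr),
    ← dist_mul_left_self x, mul_inv_cancel_left, inv_mul_le_iff₀ hr]

lemma isFiniteMeasureOnCompacts_blow (φ : Measure G) [IsFiniteMeasureOnCompacts φ] (x : G)
    {r : ℝ} (hr : 0 < r) (h : ℕ) : IsFiniteMeasureOnCompacts (blow φ x r h) := by
  refine ⟨fun K hK => ?_⟩
  have hS : Continuous fun q : G => x * dil r q :=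
    (isometry_mul_left x).continuous.comp (continuous_dil hr)
  have hsub : (fun p : G => dil r⁻¹ (x⁻¹ * p)) ⁻¹' K ⊆ (fun q => x * dil r q) '' K :=
    fun p hp => ⟨_, hp, by simp only [dil_dil_inv hr.ne', mul_inv_cancel_left]⟩
  rw [blow, Measure.smul_apply, Measure.map_apply (measurable_dil_inv_mul x hr) hK.measurableSet,
    smul_eq_mul]
  exact ENNReal.mul_lt_top (ENNReal.inv_lt_top.2 (ENNReal.pow_pos (ENNReal.ofReal_pos.2 hr) h))
    ((measure_mono hsub).trans_lt (hK.image hS).measure_lt_top)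

lemma exists_blow_le_of_upDen_lt_top {h : ℕ} {φ : Measure G} {x : G} (hx : upDen h φ x < ⊤)
    {K : Set G} (hK : Bornology.IsBounded K) :
    ∃ C : ℝ≥0, ∀ᶠ r in 𝓝[>] 0, blow φ x r h K ≤ C := by
  obtain ⟨R, hR, hKR⟩ := hK.subset_closedBall_lt 0 1
  set c := upDen h φ x + 1
  have hc : c ≠ ⊤ := ENNReal.add_ne_top.2 ⟨hx.ne, ENNReal.one_ne_top⟩
  have hpow : ∀ {s : ℝ}, 0 < s → ENNReal.ofReal s ^ h ≠ 0 := fun hs =>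
    pow_ne_zero _ (ENNReal.ofReal_pos.2 hs).ne'
  have hsmall : ∀ᶠ s in 𝓝[>] 0, φ (closedBall x s) ≤ c * ENNReal.ofReal s ^ h := by
    filter_upwards [eventually_lt_of_limsup_lt (ENNReal.lt_add_right hx.ne one_ne_zero),
      self_mem_nhdsWithin] with s hs (hs₀ : 0 < s)
    exact (ENNReal.div_le_iff (hpow hs₀) (ENNReal.pow_ne_top ENNReal.ofReal_ne_top)).1 hs.le
  have hscale : Tendsto (fun r => r * R) (𝓝[>] 0) (𝓝[>] 0) :=
    tendsto_nhdsWithin_iff.2 ⟨((continuous_mul_const R).tendsto' 0 0 (zero_mul R)).mono_left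
      nhdsWithin_le_nhds, eventually_mem_nhdsWithin.mono fun r hr => mul_pos hr hR⟩
  refine ⟨(c * ENNReal.ofReal R ^ h).toNNReal, ?_⟩
  filter_upwards [hscale.eventually hsmall, self_mem_nhdsWithin] with r hr (hr₀ : 0 < r)
  rw [ENNReal.coe_toNNReal (ENNReal.mul_ne_top hc (ENNReal.pow_ne_top ENNReal.ofReal_ne_top))]
  calc blow φ x r h K ≤ blow φ x r h (closedBall 1 R) := measure_mono hKR
    _ = (ENNReal.ofReal r ^ h)⁻¹ * φ (closedBall x (r * R)) := blow_closedBall_one φ x hr₀ h R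
    _ ≤ c * ENNReal.ofReal R ^ h := by
      rw [ENNReal.inv_mul_le_iff (hpow hr₀) (ENNReal.pow_ne_top ENNReal.ofReal_ne_top)]
      calc φ (closedBall x (r * R)) ≤ c * ENNReal.ofReal (r * R) ^ h := hr
        _ = ENNReal.ofReal r ^ h * (c * ENNReal.ofReal R ^ h) := by
          rw [ENNReal.ofReal_mul hr₀.le, mul_pow]
          ring

end Carnot

theorem tangent_measures_weakstar_compact_general
    (G : Type*) [CarnotGroup G] [MeasurableSpace G] [BorelSpace G]
    (h : ℕ)
    (φ : Measure G) [IsFiniteMeasureOnCompacts φ]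
    (hφ : PStarRect G h φ) :
    ∀ᵐ x ∂φ, ∀ ν : ℕ → Measure G, (∀ i, ν i ∈ Tan h φ x) →
      ∃ σ : ℕ → ℕ, StrictMono σ ∧ ∃ ν' ∈ Tan h φ x, WeakStar (fun i => ν (σ i)) ν' := by
  filter_upwards [hφ] with x hx ν hν
  rcases CarnotGroup.properSpace_or_forall_eq_zero (G := G) with hG | hzero
  · simp only [tan_eq_vagueLimitsAtZero, weakStar_iff_tendstoVaguely] at hν ⊢
    exact exists_strictMono_tendstoVaguely_mem_vagueLimitsAtZero
      (fun r hr => isFiniteMeasureOnCompacts_blow φ x hr h)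
      (fun K hK => exists_blow_le_of_upDen_lt_top hx.1.2.2 hK.isBounded) hν
  · refine ⟨id, strictMono_id, ν 0, hν 0, fun f hf hfs => ?_⟩
    simp [hzero f hf hfs]

/-- **Weak-* compactness of the set of tangent measures.** If `φ` is a `𝒫*_h`-rectifiable
Radon measure on a Carnot group `G`, then for `φ`-almost every `x` every sequence of tangent
measures of `φ` at `x` admits a subsequence converging weakly-* (in duality with continuous
compactly supported functions) to a tangent measure of `φ` at `x`. -/
theorem tangent_measures_weakstar_compact
    (G : Type*) [CarnotGroup G] [MeasurableSpace G] [BorelSpace G]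
    (h : ℕ) (h1 : 1 ≤ h) (hQ : h ≤ Qdim G)
    (φ : Measure G) [IsFiniteMeasureOnCompacts φ]
    (hφ : PStarRect G h φ) :
    ∀ᵐ x ∂φ, ∀ ν : ℕ → Measure G, (∀ i, ν i ∈ Tan h φ x) →
      ∃ σ : ℕ → ℕ, StrictMono σ ∧ ∃ ν' ∈ Tan h φ x, WeakStar (fun i => ν (σ i)) ν' :=
  tangent_measures_weakstar_compact_general G h φ hφ
end

section
/- Let C > 0 and let V ∈ Gr_⊴^𝔰(h) satisfy 𝔢(V) ≥ C. Then there exists a normal complementary subgroup L of V such that, denoting by P_V and P_L the projections relative to the splitting G = V·L, one has ‖P_V(g)‖ ≤ (1 + 2/C)·‖g‖ and ‖P_L(g)‖ ≤ (2/C)·‖g‖ for every g ∈ G. -/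
open MeasureTheory Metric Filter Topology Set
open scoped ENNReal NNReal

open Carnot MeasureTheory Metric Filter Topology Set
open scoped ENNReal NNReal

/-- If `V ∈ Gr_⊴^𝔰(h)` satisfies `𝔢(V) ≥ C`, then there is a normal complementary subgroup
`L` of `V` such that the splitting projections satisfy `‖P_V(g)‖ ≤ (1+2/C)‖g‖` and
`‖P_L(g)‖ ≤ (2/C)‖g‖` for every `g ∈ G`. -/
theorem exists_good_normal_complement
    (G : Type*) [CarnotGroup G] [MeasurableSpace G] [BorelSpace G]
    (h : ℕ) (h1 : 1 ≤ h) (hQ : h ≤ Qdim G)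
    (s : Fin (kap G) → ℕ)
    (C : ℝ) (hC : 0 < C)
    (V : Subgroup G) (hV : V ∈ GrNs G h s) (he : C ≤ eConst V) :
    ∃ L : Subgroup G, IsHomogeneous L ∧ L.Normal ∧ AreComplementary V L ∧
      ∀ g v l : G, v ∈ V → l ∈ L → g = v * l →
        gnorm v ≤ (1 + 2 / C) * gnorm g ∧ gnorm l ≤ (2 / C) * gnorm g := by
  have hS : {e : ℝ | ∃ L : Subgroup G, IsHomogeneous L ∧ L.Normal ∧ AreComplementary V L ∧
      e = splitConst V L / 2}.Nonempty := by
    by_contra hne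
    rw [Set.not_nonempty_iff_eq_empty] at hne
    rw [eConst, hne, Real.sSup_empty] at he
    linarith
  obtain ⟨e, ⟨L, hLhom, hLnorm, hLcomp, heq⟩, hCe⟩ :=
    exists_lt_of_lt_csSup hS (show C / 2 < eConst V by linarith)
  have hsplit : C < splitConst V L := by rw [heq] at hCe; linarith
  have hT : {c : ℝ | ∀ g v l : G, v ∈ V → l ∈ L → g = v * l →
      c * gnorm l ≤ infDist g (V : Set G)}.Nonempty := by
    by_contra hne
    rw [Set.not_nonempty_iff_eq_empty] at hne
    rw [splitConst, hne, Real.sSup_empty] at hsplit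
    linarith
  obtain ⟨c, hc, hCc⟩ := exists_lt_of_lt_csSup hT
    (show C / 2 < splitConst V L by linarith)
  refine ⟨L, hLhom, hLnorm, hLcomp, fun g v l hv hl hg => ?_⟩
  have hc0 : 0 < c := by linarith
  have hl0 : 0 ≤ gnorm l := dist_nonneg
  have hg0 : 0 ≤ gnorm g := dist_nonneg
  have hInf : infDist g (V : Set G) ≤ gnorm g := by
    have h1V : (1 : G) ∈ (V : Set G) := V.one_mem
    exact le_trans (infDist_le_dist_of_mem h1V) le_rfl
  have key : c * gnorm l ≤ gnorm g := le_trans (hc g v l hv hl hg) hInf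
  have hgl : gnorm l ≤ (2 / C) * gnorm g := by
    rw [div_mul_eq_mul_div, le_div_iff₀ hC]
    nlinarith
  refine ⟨?_, hgl⟩
  have hv' : v = g * l⁻¹ := by rw [hg]; group
  have hlinv : dist (l⁻¹ : G) 1 = gnorm l := by
    have h2 := CarnotGroup.dist_leftInvariant l l⁻¹ (1 : G)
    rw [mul_inv_cancel, mul_one] at h2
    rw [← h2, gnorm, dist_comm]
  have htri : gnorm v ≤ gnorm g + gnorm l := by
    rw [hv', gnorm]
    calc dist (g * l⁻¹) 1 ≤ dist (g * l⁻¹) g + dist g 1 := dist_triangle _ _ _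
      _ = dist (l⁻¹ : G) 1 + dist g 1 := by
          have h3 := CarnotGroup.dist_leftInvariant g l⁻¹ (1 : G)
          rw [mul_one] at h3; rw [h3]
      _ = gnorm g + gnorm l := by rw [hlinv]; unfold gnorm; ring
  have : (1 + 2 / C) * gnorm g = gnorm g + (2 / C) * gnorm g := by ring
  linarith
end

section
/- Let W₁, W₂ ∈ Gr(h), α > 0 and ε > 0. If d_G(W₁,W₂) < ε/4, then C_{W₁}(α) ⊆ C_{W₂}(α+ε), where C_W(β) := {w ∈ G : dist(w,W) ≤ β·‖w‖} is the intrinsic cone over W of opening β. -/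
open MeasureTheory Metric Filter Topology Set
open scoped ENNReal NNReal

open Carnot MeasureTheory Metric Filter Topology Set
open scoped ENNReal NNReal

section Aux

variable {G : Type*} [CarnotGroup G]

lemma dil_dil_inv (a : ℝ) (ha : a ≠ 0) (x : G) :
    CarnotGroup.dil a (CarnotGroup.dil a⁻¹ x) = x := by
  let f : G →ₗ[ℝ] G :=
    (IsLinearMap.mk' _ (CarnotGroup.dil_linear (G := G) a)).comp
      (IsLinearMap.mk' _ (CarnotGroup.dil_linear (G := G) a⁻¹))
  have hle : ∀ i, CarnotGroup.layer (G := G) i ≤ LinearMap.eqLocus f LinearMap.id := by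
    intro i y hy
    show CarnotGroup.dil a (CarnotGroup.dil a⁻¹ y) = y
    rw [CarnotGroup.dil_layer a⁻¹ i y hy,
      (CarnotGroup.dil_linear (G := G) a).map_smul,
      CarnotGroup.dil_layer a i y hy, smul_smul, ← mul_pow, inv_mul_cancel₀ ha,
      one_pow, one_smul]
  have htop : (⊤ : Submodule ℝ G) ≤ LinearMap.eqLocus f LinearMap.id := by
    rw [← CarnotGroup.layer_iSup (G := G)]
    exact iSup_le hle
  exact htop Submodule.mem_top

lemma dil_one' (a : ℝ) : CarnotGroup.dil a (1 : G) = 1 := by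
  rw [CarnotGroup.one_eq_zero]
  exact (CarnotGroup.dil_linear (G := G) a).map_zero

lemma gnorm_dil' (a : ℝ) (ha : 0 < a) (x : G) :
    gnorm (CarnotGroup.dil a x) = a * gnorm x := by
  unfold gnorm
  conv_lhs => rw [← dil_one' (G := G) a]
  rw [CarnotGroup.dist_dil a ha]

/-- Key scaling step: a point of `W₁` is at distance at most `‖v‖ ε/4` from `W₂`. -/
lemma infDist_le_of_grDist_lt {W₁ W₂ : Subgroup G} (hW₁ : IsHomogeneous W₁)
    (hW₂ : IsHomogeneous W₂) {ε : ℝ} (hε : 0 < ε) (hd : grDist W₁ W₂ < ε / 4)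
    {v : G} (hv : v ∈ W₁) :
    infDist v (W₂ : Set G) ≤ gnorm v * (ε / 4) := by
  rcases eq_or_lt_of_le (dist_nonneg : (0:ℝ) ≤ dist v 1) with hR | hR
  · have hv1 : v = 1 := by
      have := dist_eq_zero.1 hR.symm
      exact this
    rw [hv1]
    have : infDist (1 : G) (W₂ : Set G) = 0 := infDist_zero_of_mem W₂.one_mem
    rw [this]
    have : gnorm (1 : G) = 0 := by simp [gnorm]
    rw [this, zero_mul]
  · set R : ℝ := gnorm v with hRdef
    have hR0 : 0 < R := hR
    have hRinv : 0 < R⁻¹ := inv_pos.2 hR0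
    set v' : G := CarnotGroup.dil R⁻¹ v with hv'def
    have hv'W₁ : v' ∈ (W₁ : Set G) := by
      have := hW₁.2 R⁻¹ hRinv
      rw [← this]
      exact ⟨v, hv, rfl⟩
    have hv'norm : gnorm v' = 1 := by
      rw [hv'def, gnorm_dil' R⁻¹ hRinv, inv_mul_cancel₀ hR0.ne']
    have hv'ball : v' ∈ closedBall (1 : G) 1 := by
      rw [mem_closedBall, dist_comm]
      rw [dist_comm]
      exact le_of_eq hv'norm
    have hne₁ : ((W₁ : Set G) ∩ closedBall (1 : G) 1).Nonempty :=
      ⟨1, W₁.one_mem, mem_closedBall_self zero_le_one⟩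
    have hne₂ : ((W₂ : Set G) ∩ closedBall (1 : G) 1).Nonempty :=
      ⟨1, W₂.one_mem, mem_closedBall_self zero_le_one⟩
    have hbdd₁ : Bornology.IsBounded ((W₁ : Set G) ∩ closedBall (1 : G) 1) :=
      (isBounded_closedBall).subset inter_subset_right
    have hbdd₂ : Bornology.IsBounded ((W₂ : Set G) ∩ closedBall (1 : G) 1) :=
      (isBounded_closedBall).subset inter_subset_right
    have hfin := hausdorffEdist_ne_top_of_nonempty_of_bounded hne₁ hne₂ hbdd₁ hbdd₂
    have hle : infDist v' ((W₂ : Set G) ∩ closedBall (1 : G) 1) < ε / 4 :=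
      lt_of_le_of_lt (infDist_le_hausdorffDist_of_mem (mem_inter hv'W₁ hv'ball) hfin) hd
    obtain ⟨u', hu', hdu'⟩ := (infDist_lt_iff hne₂).1 hle
    set u : G := CarnotGroup.dil R u' with hudef
    have huW₂ : u ∈ (W₂ : Set G) := by
      have := hW₂.2 R hR0
      rw [← this]
      exact ⟨u', hu'.1, rfl⟩
    have hvu : dist v u ≤ R * (ε / 4) := by
      have hvv' : CarnotGroup.dil R v' = v := dil_dil_inv R hR0.ne' v
      calc dist v u = dist (CarnotGroup.dil R v') (CarnotGroup.dil R u') := by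
            rw [hvv']
        _ = R * dist v' u' := CarnotGroup.dist_dil R hR0 v' u'
        _ ≤ R * (ε / 4) := by
            exact mul_le_mul_of_nonneg_left hdu'.le hR0.le
    exact le_trans (infDist_le_dist_of_mem huW₂) hvu

end Aux

/-- **Stability of cones.** If `W₁, W₂ ∈ Gr(h)` and `d_G(W₁, W₂) < ε/4`, then
`C_{W₁}(α) ⊆ C_{W₂}(α + ε)`. -/
theorem cone_inclusion_of_grDist_lt
    (G : Type*) [CarnotGroup G] [MeasurableSpace G] [BorelSpace G]
    (h : ℕ) (h1 : 1 ≤ h) (hQ : h ≤ Qdim G)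
    (W₁ W₂ : Subgroup G) (hW₁ : W₁ ∈ Gr G h) (hW₂ : W₂ ∈ Gr G h)
    (α ε : ℝ) (hα : 0 < α) (hε : 0 < ε)
    (hd : grDist W₁ W₂ < ε / 4) :
    cone W₁ α ⊆ cone W₂ (α + ε) := by
  intro w hw
  have h1W₂ : (1 : G) ∈ W₂ := W₂.one_mem
  have hg : 0 ≤ gnorm w := dist_nonneg
  by_cases htriv : 1 ≤ α + ε
  · show infDist w (W₂ : Set G) ≤ (α + ε) * gnorm w
    calc infDist w (W₂ : Set G) ≤ dist w 1 := infDist_le_dist_of_mem h1W₂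
      _ = gnorm w := rfl
      _ ≤ (α + ε) * gnorm w := le_mul_of_one_le_left hg htriv
  · push_neg at htriv
    have hα1 : α < 1 := by linarith
    have hε1 : ε < 1 := by linarith
    show infDist w (W₂ : Set G) ≤ (α + ε) * gnorm w
    refine le_of_forall_pos_le_add ?_
    intro η hη
    set N : ℝ := gnorm w with hN
    have hinf : infDist w (W₁ : Set G) < α * N + η / 2 := lt_of_le_of_lt hw (by linarith)
    obtain ⟨v, hvW₁, hvd⟩ := (infDist_lt_iff ⟨1, W₁.one_mem⟩).1 hinf
    have hkey : infDist v (W₂ : Set G) ≤ gnorm v * (ε / 4) :=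
      infDist_le_of_grDist_lt hW₁.1 hW₂.1 hε hd hvW₁
    have hRv : gnorm v ≤ dist v w + N := dist_triangle v w 1
    have htri : infDist w (W₂ : Set G) ≤ infDist v (W₂ : Set G) + dist w v :=
      infDist_le_infDist_add_dist
    have hgv : 0 ≤ gnorm v := dist_nonneg
    have hdc : dist v w = dist w v := dist_comm v w
    have hq : (0:ℝ) ≤ ε / 4 := by linarith
    have e1 : gnorm v * (ε / 4) ≤ (dist w v + N) * (ε / 4) := by
      rw [hdc] at hRv
      exact mul_le_mul_of_nonneg_right hRv hq
    have e2 : dist w v * (ε / 4) ≤ (α * N + η / 2) * (ε / 4) :=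
      mul_le_mul_of_nonneg_right hvd.le hq
    nlinarith [mul_nonneg (mul_nonneg (sub_nonneg.2 hα1.le) hg) hε.le,
      mul_nonneg (sub_nonneg.2 hε1.le) hη.le,
      dist_nonneg (x := w) (y := v)]
end
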